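/- arXiv:2308.14283 — 2 statements merged into one kernel-verified Lean document; each statement's English description precedes it below -/
import Mathlib

section
/- If ‖G(t)‖ ≤ N e^{-ν|t|} for all t ∈ ℝ with N,ν > 0, and f : ℝ₊ → 𝔅 is continuous and bounded, then for 0 < L < l and 0 ≤ t ≤ L, the function φ(t) = ∫₀^∞ G(t-τ) f(τ) dτ satisfies max_{0≤t≤L} |φ(t)| ≤ (max_{0≤τ≤l} |f(τ)|) · max_{0≤t≤L} (N/ν)(2 - e^{-νt} - e^{ν(t-l)}) + (N/ν) ‖f‖ e^{ν(L-l)}, where ‖f‖ = sup_{t≥0} |f(t)|. -/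
/-!
Bound the integrand pointwise by `N e^{-ν|t-τ|}` times `max_{[0,l]} ‖f‖` for `τ ≤ l` and times
`sup ‖f‖` for `τ > l`, and integrate the kernel explicitly: over `(0, l]` it gives
`(2 - e^{-νt} - e^{ν(t-l)}) / ν`, over `(l, ∞)` it gives `e^{ν(t-l)} / ν ≤ e^{ν(L-l)} / ν`.
-/

open Set MeasureTheory Real

theorem integral_exp_mul {c : ℝ} (hc : c ≠ 0) (a b : ℝ) :
    ∫ x in a..b, exp (c * x) = (exp (c * b) - exp (c * a)) / c := by
  rw [intervalIntegral.integral_comp_mul_left (fun x => exp x) hc, integral_exp, smul_eq_mul]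
  ring

section ExpKernel

variable {ν : ℝ}

theorem integral_exp_neg_abs_sub_Ioc (hν : 0 < ν) {a b t : ℝ} (hat : a ≤ t) (htb : t ≤ b) :
    ∫ τ in Ioc a b, exp (-ν * |t - τ|) = (2 - exp (-ν * (t - a)) - exp (-ν * (b - t))) / ν := by
  have hcont : Continuous fun τ => exp (-ν * |t - τ|) := by fun_prop
  have left : ∫ τ in a..t, exp (-ν * |t - τ|) = ∫ τ in a..t, exp (ν * (τ - t)) := by
    refine intervalIntegral.integral_congr fun τ hτ => ?_
    rw [uIcc_of_le hat] at hτ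
    simp only [abs_of_nonneg (sub_nonneg.2 hτ.2)]
    ring_nf
  have right : ∫ τ in t..b, exp (-ν * |t - τ|) = ∫ τ in t..b, exp (-ν * (τ - t)) := by
    refine intervalIntegral.integral_congr fun τ hτ => ?_
    rw [uIcc_of_le htb] at hτ
    simp only [abs_sub_comm t, abs_of_nonneg (sub_nonneg.2 hτ.1)]
  rw [← intervalIntegral.integral_of_le (hat.trans htb),
    ← intervalIntegral.integral_add_adjacent_intervals (hcont.intervalIntegrable a t)
      (hcont.intervalIntegrable t b), left, right,
    intervalIntegral.integral_comp_sub_right (fun x => exp (ν * x)),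
    intervalIntegral.integral_comp_sub_right (fun x => exp (-ν * x)),
    integral_exp_mul hν.ne', integral_exp_mul (neg_ne_zero.2 hν.ne')]
  simp only [sub_self, mul_zero, exp_zero]
  field_simp
  ring_nf

theorem exp_neg_abs_sub_eqOn_Ioi {b t : ℝ} (htb : t ≤ b) :
    EqOn (fun τ => exp (-ν * |t - τ|)) (fun τ => exp (ν * t) * exp (-ν * τ)) (Ioi b) := by
  intro τ hτ
  simp only [abs_sub_comm t, abs_of_pos (sub_pos.2 (htb.trans_lt hτ)), ← exp_add]
  ring_nf

theorem integrableOn_exp_neg_abs_sub_Ioi (hν : 0 < ν) {b t : ℝ} (htb : t ≤ b) :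
    IntegrableOn (fun τ => exp (-ν * |t - τ|)) (Ioi b) :=
  IntegrableOn.congr_fun ((exp_neg_integrableOn_Ioi b hν).const_mul _)
    (exp_neg_abs_sub_eqOn_Ioi htb).symm measurableSet_Ioi

theorem integral_exp_neg_abs_sub_Ioi (hν : 0 < ν) {b t : ℝ} (htb : t ≤ b) :
    ∫ τ in Ioi b, exp (-ν * |t - τ|) = exp (-ν * (b - t)) / ν := by
  rw [setIntegral_congr_fun measurableSet_Ioi (exp_neg_abs_sub_eqOn_Ioi htb),
    integral_const_mul, integral_exp_mul_Ioi (neg_lt_zero.2 hν), neg_div_neg_eq, mul_div_assoc',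
    ← exp_add]
  ring_nf

end ExpKernel

theorem norm_integral_Ioi_le_of_norm_le_exp {E F : Type*} [NormedAddCommGroup E] [NormedSpace ℝ E]
    [NormedAddCommGroup F] [NormedSpace ℝ F] {G : ℝ → E →L[ℝ] F} {N ν : ℝ} (hν : 0 < ν)
    (hG : ∀ t, ‖G t‖ ≤ N * exp (-ν * |t|)) {f : ℝ → E} {A S l t : ℝ}
    (hA : ∀ τ ∈ Ioc 0 l, ‖f τ‖ ≤ A) (hS : ∀ τ ∈ Ioi l, ‖f τ‖ ≤ S) (ht0 : 0 ≤ t) (htl : t ≤ l) :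
    ‖∫ τ in Ioi 0, G (t - τ) (f τ)‖ ≤
      A * (N / ν * (2 - exp (-ν * t) - exp (ν * (t - l)))) + N / ν * S * exp (ν * (t - l)) := by
  set k : ℝ → ℝ := fun τ => exp (-ν * |t - τ|)
  set g : ℝ → ℝ := fun τ => N * k τ * if τ ≤ l then A else S
  have hg_Ioc : EqOn g (fun τ => N * A * k τ) (Ioc 0 l) := fun τ hτ => by
    simp only [g, if_pos hτ.2]; ring
  have hg_Ioi : EqOn g (fun τ => N * S * k τ) (Ioi l) := fun τ hτ => by
    simp only [g, if_neg (not_le.2 (mem_Ioi.1 hτ))]; ring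
  have hg_int_Ioc : IntegrableOn g (Ioc 0 l) :=
    IntegrableOn.congr_fun ((by fun_prop : Continuous k).integrableOn_Ioc.const_mul _)
      hg_Ioc.symm measurableSet_Ioc
  have hg_int_Ioi : IntegrableOn g (Ioi l) :=
    IntegrableOn.congr_fun ((integrableOn_exp_neg_abs_sub_Ioi hν htl).const_mul _)
      hg_Ioi.symm measurableSet_Ioi
  have hl : Ioc 0 l ∪ Ioi l = Ioi 0 := Ioc_union_Ioi_eq_Ioi (ht0.trans htl)
  have hbound : ∀ τ ∈ Ioi 0, ‖G (t - τ) (f τ)‖ ≤ g τ := fun τ hτ => by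
    have hk : 0 ≤ N * k τ := (norm_nonneg _).trans (hG (t - τ))
    refine ((G (t - τ)).le_opNorm (f τ)).trans (mul_le_mul (hG _) ?_ (norm_nonneg _) hk)
    split_ifs with hτl
    exacts [hA τ ⟨hτ, hτl⟩, hS τ (not_le.1 hτl)]
  calc ‖∫ τ in Ioi 0, G (t - τ) (f τ)‖ ≤ ∫ τ in Ioi 0, g τ :=
        norm_integral_le_of_norm_le (hl ▸ hg_int_Ioc.union hg_int_Ioi)
          (ae_restrict_of_forall_mem measurableSet_Ioi hbound)
    _ = N * A * (∫ τ in Ioc 0 l, k τ) + N * S * ∫ τ in Ioi l, k τ := by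
        rw [← hl, setIntegral_union (Ioc_disjoint_Ioi le_rfl) measurableSet_Ioi hg_int_Ioc
          hg_int_Ioi, setIntegral_congr_fun measurableSet_Ioc hg_Ioc,
          setIntegral_congr_fun measurableSet_Ioi hg_Ioi, integral_const_mul, integral_const_mul]
    _ = _ := by
        rw [integral_exp_neg_abs_sub_Ioc hν ht0 htl, integral_exp_neg_abs_sub_Ioi hν htl,
          sub_zero, show -ν * (l - t) = ν * (t - l) by ring]
        ring

theorem stmt4_general {𝔅 : Type*} [NormedAddCommGroup 𝔅] [NormedSpace ℝ 𝔅]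
    (G : ℝ → 𝔅 →L[ℝ] 𝔅) (N ν : ℝ) (hN : 0 < N) (hν : 0 < ν)
    (hG : ∀ t : ℝ, ‖G t‖ ≤ N * Real.exp (-ν * |t|))
    (f : ℝ → 𝔅)
    (C : ℝ) (hfb : ∀ t : ℝ, 0 ≤ t → ‖f t‖ ≤ C)
    (φ : ℝ → 𝔅) (hφ : ∀ t : ℝ, φ t = ∫ τ in Ioi (0 : ℝ), G (t - τ) (f τ))
    (L l : ℝ) (hL : 0 < L) (hLl : L < l) :
    (⨆ t : Icc (0 : ℝ) L, ‖φ t‖) ≤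
      (⨆ τ : Icc (0 : ℝ) l, ‖f τ‖) *
        (⨆ t : Icc (0 : ℝ) L,
          N / ν * (2 - Real.exp (-ν * t) - Real.exp (ν * ((t : ℝ) - l)))) +
      N / ν * (⨆ t : Ici (0 : ℝ), ‖f t‖) * Real.exp (ν * (L - l)) := by
  have le_iSup_norm : ∀ s ⊆ Ici (0 : ℝ), ∀ τ ∈ s, ‖f τ‖ ≤ ⨆ x : s, ‖f x‖ := fun s hs τ hτ =>
    le_ciSup (f := fun x : s => ‖f x‖) ⟨C, forall_mem_range.2 fun x => hfb x (hs x.2)⟩ ⟨τ, hτ⟩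
  have hA : 0 ≤ ⨆ τ : Icc (0 : ℝ) l, ‖f τ‖ := Real.iSup_nonneg fun _ => norm_nonneg _
  have hS : 0 ≤ ⨆ t : Ici (0 : ℝ), ‖f t‖ := Real.iSup_nonneg fun _ => norm_nonneg _
  have hkernel_bdd : BddAbove (range fun t : Icc (0 : ℝ) L =>
      N / ν * (2 - exp (-ν * t) - exp (ν * ((t : ℝ) - l)))) :=
    ⟨N / ν * 2, forall_mem_range.2 fun t => mul_le_mul_of_nonneg_left
      (by linarith [exp_pos (-ν * t), exp_pos (ν * ((t : ℝ) - l))]) (by positivity)⟩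
  have : Nonempty (Icc (0 : ℝ) L) := ⟨⟨0, le_rfl, hL.le⟩⟩
  refine ciSup_le fun ⟨t, ht0, htL⟩ => ?_
  rw [hφ]
  refine (norm_integral_Ioi_le_of_norm_le_exp hν hG
    (fun τ hτ => le_iSup_norm _ Icc_subset_Ici_self τ (Ioc_subset_Icc_self hτ))
    (fun τ hτ => le_iSup_norm _ subset_rfl τ (hL.trans (hLl.trans hτ)).le) ht0
    (htL.trans hLl.le)).trans ?_
  gcongr
  exact le_ciSup hkernel_bdd ⟨t, ht0, htL⟩

theorem stmt4 {𝔅 : Type*} [NormedAddCommGroup 𝔅] [NormedSpace ℝ 𝔅] [CompleteSpace 𝔅]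
    (G : ℝ → 𝔅 →L[ℝ] 𝔅) (N ν : ℝ) (hN : 0 < N) (hν : 0 < ν)
    (hG : ∀ t : ℝ, ‖G t‖ ≤ N * Real.exp (-ν * |t|))
    (f : ℝ → 𝔅) (hf : ContinuousOn f (Ici 0))
    (C : ℝ) (hfb : ∀ t : ℝ, 0 ≤ t → ‖f t‖ ≤ C)
    (φ : ℝ → 𝔅) (hφ : ∀ t : ℝ, φ t = ∫ τ in Ioi (0 : ℝ), G (t - τ) (f τ))
    (L l : ℝ) (hL : 0 < L) (hLl : L < l) :
    (⨆ t : Icc (0 : ℝ) L, ‖φ t‖) ≤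
      (⨆ τ : Icc (0 : ℝ) l, ‖f τ‖) *
        (⨆ t : Icc (0 : ℝ) L,
          N / ν * (2 - Real.exp (-ν * t) - Real.exp (ν * ((t : ℝ) - l)))) +
      N / ν * (⨆ t : Ici (0 : ℝ), ‖f t‖) * Real.exp (ν * (L - l)) :=
  stmt4_general G N ν hN hν hG f C hfb φ hφ L l hL hLl
end

section
/- Let f : 𝕋 → 𝔅 (𝕋 = ℝ or ℝ₊) be continuous with (1/T)|∫_t^{t+T} f(s) ds| → 0 as T → +∞, uniformly in t ∈ 𝕋. Then f(t/ε) 'integrally converges' to 0 as ε → 0⁺: for every L > 0, sup_{|t-s|≤L, t,s∈𝕋} |∫_s^t f(τ/ε) dτ| → 0 as ε → 0⁺. -/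
/-!
Split `[s, t]` off a window of length `T₀ + (t - s)` starting at `s`: the integral over
`[s, t]` is the difference of the integrals over two windows of length at least `T₀`, so it
is at most `δ (2 T₀ + (t - s))`. The substitution `τ = ε x` turns this into
`‖∫_s^t f (τ / ε) dτ‖ ≤ δ (2 T₀ ε + |t - s|)`, which is below any prescribed bound once `δ` is
small compared with `L` and `ε` is small compared with `1 / T₀`.
-/

open Set Filter Topology intervalIntegral

section UniformMean

variable {E : Type*} [NormedAddCommGroup E] {f : ℝ → E}

theorem intervalIntegrable_of_continuousOn_Ici (hf : ContinuousOn f (Ici 0)) {a b : ℝ}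
    (ha : 0 ≤ a) (hb : 0 ≤ b) : IntervalIntegrable f MeasureTheory.volume a b :=
  (hf.mono fun _ hx => le_trans (le_min ha hb) hx.1).intervalIntegrable

variable [NormedSpace ℝ E] {δ T₀ : ℝ} (hf : ContinuousOn f (Ici 0)) (hT₀ : 0 ≤ T₀)
  (hmean : ∀ T, T₀ ≤ T → ∀ t, 0 ≤ t → ‖∫ x in t..(t + T), f x‖ ≤ δ * T)
include hf hT₀ hmean

theorem norm_integral_le_of_uniform_mean {s t : ℝ} (hs : 0 ≤ s) (hst : s ≤ t) :
    ‖∫ x in s..t, f x‖ ≤ δ * (2 * T₀ + (t - s)) := by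
  have ht : 0 ≤ t := hs.trans hst
  have hlong := hmean (T₀ + (t - s)) (by linarith) s hs
  have hshort := hmean T₀ le_rfl t ht
  have hsplit : ∫ x in s..t, f x = (∫ x in s..(t + T₀), f x) - ∫ x in t..(t + T₀), f x :=
    eq_sub_of_add_eq <| integral_add_adjacent_intervals
      (intervalIntegrable_of_continuousOn_Ici hf hs ht)
      (intervalIntegrable_of_continuousOn_Ici hf ht (by linarith))
  rw [show s + (T₀ + (t - s)) = t + T₀ by ring] at hlong
  calc ‖∫ x in s..t, f x‖
      ≤ ‖∫ x in s..(t + T₀), f x‖ + ‖∫ x in t..(t + T₀), f x‖ := hsplit ▸ norm_sub_le _ _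
    _ ≤ δ * (T₀ + (t - s)) + δ * T₀ := add_le_add hlong hshort
    _ = δ * (2 * T₀ + (t - s)) := by ring

theorem norm_integral_comp_div_le_of_uniform_mean {ε : ℝ} (hε : 0 < ε) {s t : ℝ}
    (hs : 0 ≤ s) (ht : 0 ≤ t) :
    ‖∫ τ in s..t, f (τ / ε)‖ ≤ δ * (2 * T₀ * ε + |t - s|) := by
  wlog hst : s ≤ t generalizing s t
  · rw [integral_symm, norm_neg, abs_sub_comm]
    exact this ht hs (le_of_not_ge hst)
  have hbound := norm_integral_le_of_uniform_mean hf hT₀ hmean (div_nonneg hs hε.le)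
    (div_le_div_of_nonneg_right hst hε.le)
  rw [integral_comp_div f hε.ne', norm_smul, Real.norm_eq_abs, abs_of_pos hε,
    abs_of_nonneg (sub_nonneg.mpr hst)]
  calc ε * ‖∫ x in s / ε..t / ε, f x‖
      ≤ ε * (δ * (2 * T₀ + (t / ε - s / ε))) := mul_le_mul_of_nonneg_left hbound hε.le
    _ = δ * (2 * T₀ * ε + (t - s)) := by field_simp

end UniformMean

theorem stmt14_general {𝔅 : Type*} [NormedAddCommGroup 𝔅] [NormedSpace ℝ 𝔅]
    (f : ℝ → 𝔅) (hf : ContinuousOn f (Ici 0))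
    (havg : ∀ δ : ℝ, 0 < δ → ∃ T₀ : ℝ, 0 < T₀ ∧ ∀ T : ℝ, T₀ ≤ T →
      ∀ t : ℝ, 0 ≤ t → ‖∫ s in t..(t + T), f s‖ ≤ δ * T) :
    ∀ L : ℝ, 0 < L → ∀ δ : ℝ, 0 < δ → ∃ ε₀ : ℝ, 0 < ε₀ ∧
      ∀ ε : ℝ, 0 < ε → ε ≤ ε₀ →
        ∀ t s : ℝ, 0 ≤ t → 0 ≤ s → |t - s| ≤ L →
          ‖∫ τ in s..t, f (τ / ε)‖ < δ := by
  intro L hL δ hδ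
  have hLδ : 0 < δ / (L + 2) := by positivity
  obtain ⟨T₀, hT₀, hmean⟩ := havg (δ / (L + 2)) hLδ
  refine ⟨1 / (2 * T₀), by positivity, fun ε hε hεle t s ht hs hts => ?_⟩
  have hεT₀ : 2 * T₀ * ε ≤ 1 := by rwa [le_div_iff₀ (by positivity), mul_comm] at hεle
  calc ‖∫ τ in s..t, f (τ / ε)‖
      ≤ δ / (L + 2) * (2 * T₀ * ε + |t - s|) :=
        norm_integral_comp_div_le_of_uniform_mean hf hT₀.le hmean hε hs ht
    _ < δ / (L + 2) * (L + 2) := mul_lt_mul_of_pos_left (by linarith) hLδ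
    _ = δ := div_mul_cancel₀ δ (by positivity)

theorem stmt14 {𝔅 : Type*} [NormedAddCommGroup 𝔅] [NormedSpace ℝ 𝔅] [CompleteSpace 𝔅]
    (f : ℝ → 𝔅) (hf : ContinuousOn f (Ici 0))
    (havg : ∀ δ : ℝ, 0 < δ → ∃ T₀ : ℝ, 0 < T₀ ∧ ∀ T : ℝ, T₀ ≤ T →
      ∀ t : ℝ, 0 ≤ t → ‖∫ s in t..(t + T), f s‖ ≤ δ * T) :
    ∀ L : ℝ, 0 < L → ∀ δ : ℝ, 0 < δ → ∃ ε₀ : ℝ, 0 < ε₀ ∧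
      ∀ ε : ℝ, 0 < ε → ε ≤ ε₀ →
        ∀ t s : ℝ, 0 ≤ t → 0 ≤ s → |t - s| ≤ L →
          ‖∫ τ in s..t, f (τ / ε)‖ < δ :=
  stmt14_general f hf havg
end
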